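/- In the LASLiN model on n nodes, for all sufficiently large n and for any assignment of integer predictions p : V → {1,…,⌈ln n⌉}, the probability that the maximum degree of the resulting continuous skip list network is at least 4·ln² n is at most 1/n². -/

import Mathlib

open scoped Classical ENNReal NNReal
open MeasureTheory ProbabilityTheory

namespace P2P

variable {n : ℕ}

/-- Edge relation of a (continuous) skip list network: `u` and `v` are neighbors iff no node
strictly between them has height at least `min (h u) (h v)`. -/
def IsEdge {α : Type*} [LinearOrder α] (h : Fin n → α) (u v : Fin n) : Prop :=
  u ≠ v ∧ ∀ x : Fin n, min u v < x → x < max u v → h x < min (h u) (h v)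

/-- The greedy next hop from `x` towards destination `v`. -/
noncomputable def nextHop {α : Type*} [LinearOrder α] (h : Fin n → α) (v x : Fin n) : Fin n :=
  if x < v then WithBot.unbotD x (Finset.univ.filter fun y => IsEdge h x y ∧ x < y ∧ y ≤ v).max
  else if v < x then WithTop.untopD x (Finset.univ.filter fun y => IsEdge h x y ∧ v ≤ y ∧ y < x).min
  else x

/-- The greedy routing path from `x` to `v`, with fuel. -/
noncomputable def routeAux {α : Type*} [LinearOrder α] (h : Fin n → α) (v : Fin n) :
    ℕ → Fin n → List (Fin n)
  | 0, x => [x]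
  | fuel + 1, x => if x = v then [x] else x :: routeAux h v fuel (nextHop h v x)

/-- The greedy routing path from `u` to `v` (as a list of visited nodes, starting at `u`
and ending at `v`). -/
noncomputable def route {α : Type*} [LinearOrder α] (h : Fin n → α) (u v : Fin n) :
    List (Fin n) :=
  routeAux h v n u

/-- The routing path length (number of hops) from `u` to `v`. -/
noncomputable def dist {α : Type*} [LinearOrder α] (h : Fin n → α) (u v : Fin n) : ℕ :=
  (route h u v).length - 1


/-- The degree of `u`: its number of neighbors. -/
noncomputable def degree {α : Type*} [LinearOrder α] (h : Fin n → α) (u : Fin n) : ℕ :=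
  (Finset.univ.filter fun w => IsEdge h u w).card

/-! ### Auxiliary development -/

noncomputable def unif : Measure ℝ := volume.restrict (Set.Ioo (0:ℝ) 1)

instance : IsProbabilityMeasure (unif) := by
  constructor
  rw [unif, Measure.restrict_apply_univ, Real.volume_Ioo]
  norm_num

/-- `x` lies strictly between `u` and `v`. -/
def Btw (u v x : Fin n) : Prop := (u < x ∧ x < v) ∨ (v < x ∧ x < u)

/-- `a` is on the `u`-side of `v`, at the same level. -/
def Dom (p : Fin n → ℕ) (u a v : Fin n) : Prop := Btw u v a ∧ p a = p v

/-- the (level, side) class of `x` relative to `u`. -/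
def qc (p : Fin n → ℕ) (u x : Fin n) : ℕ × Bool := (p x, decide (x < u))

/-- distance from `u`, doubled, with side tie-break. -/
def rho (u x : Fin n) : ℕ :=
  if x < u then 2 * ((u : ℕ) - (x : ℕ)) + 1 else 2 * ((x : ℕ) - (u : ℕ))

/-- rank of `v` in its class within `s`. -/
noncomputable def rk (p : Fin n → ℕ) (u : Fin n) (s : Finset (Fin n)) (v : Fin n) : ℕ :=
  (s.filter fun a => a = v ∨ Dom p u a v).card

/-- The record-constraint set, with per-class caps `c`. -/
def ES (p : Fin n → ℕ) (u : Fin n) (W s : Finset (Fin n)) (c : ℕ × Bool → ℝ) :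
    Set (Fin n → ℝ) :=
  {y | (∀ a ∈ s, y a < c (qc p u a)) ∧ ∀ v ∈ W ∩ s, ∀ a ∈ s, Dom p u a v → y a < y v}

lemma Btw.ne {u v x : Fin n} (h : Btw u v x) : x ≠ v := by
  simp only [Btw, Fin.lt_def] at h; rintro rfl; omega

lemma Btw.ne_u {u v x : Fin n} (h : Btw u v x) : x ≠ u := by
  simp only [Btw, Fin.lt_def] at h; rintro rfl; omega

lemma Btw.trans {u v v' a : Fin n} (h1 : Btw u v a) (h2 : Btw u v' v) : Btw u v' a := by
  simp only [Btw, Fin.lt_def] at *; omega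

lemma Btw.rho_lt {u v a : Fin n} (h : Btw u v a) : rho u a < rho u v := by
  simp only [Btw, Fin.lt_def] at h
  simp only [rho, Fin.lt_def]
  rcases h with ⟨h1, h2⟩ | ⟨h1, h2⟩
  · rw [if_neg (by omega), if_neg (by omega)]; omega
  · rw [if_pos (by omega), if_pos (by omega)]; omega

lemma rho_max_dom {p : Fin n → ℕ} {u a v : Fin n} (hau : a ≠ u) (hvu : v ≠ u) (hav : a ≠ v)
    (hq : qc p u a = qc p u v) (hr : rho u a ≤ rho u v) : Dom p u a v := by
  have hp : p a = p v := congrArg Prod.fst hq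
  have hside : (a < u) = (v < u) := by
    have := congrArg Prod.snd hq
    simpa [qc] using this
  refine ⟨?_, hp⟩
  have hau' : (a:ℕ) ≠ (u:ℕ) := fun h => hau (Fin.ext h)
  have hvu' : (v:ℕ) ≠ (u:ℕ) := fun h => hvu (Fin.ext h)
  have hav' : (a:ℕ) ≠ (v:ℕ) := fun h => hav (Fin.ext h)
  have hside' : ((a:ℕ) < u) ↔ ((v:ℕ) < u) := by
    constructor <;> intro h
    · have : a < u := h
      rw [hside] at this; exact this
    · have : v < u := h
      rw [← hside] at this; exact this
  simp only [Btw, Fin.lt_def]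
  simp only [rho, Fin.lt_def] at hr
  by_cases h : (a:ℕ) < u
  · rw [if_pos h, if_pos (hside'.1 h)] at hr
    right; omega
  · rw [if_neg h, if_neg (fun hh => h (hside'.2 hh))] at hr
    left; omega

lemma measurableSet_ES (p : Fin n → ℕ) (u : Fin n) (W s : Finset (Fin n)) (c : ℕ × Bool → ℝ) :
    MeasurableSet (ES p u W s c) := by
  have : ES p u W s c =
      (⋂ a ∈ (s : Set (Fin n)), {y : Fin n → ℝ | y a < c (qc p u a)}) ∩
      ⋂ v ∈ ((W ∩ s : Finset (Fin n)) : Set (Fin n)), ⋂ a ∈ (s : Set (Fin n)),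
        ⋂ (_ : Dom p u a v), {y : Fin n → ℝ | y a < y v} := by
    ext y; simp [ES, Set.mem_iInter]
  rw [this]
  refine MeasurableSet.inter ?_ ?_
  · exact MeasurableSet.biInter (Set.to_countable _) fun a _ =>
      measurableSet_lt (measurable_pi_apply a) measurable_const
  · refine MeasurableSet.biInter (Set.to_countable _) fun v _ =>
      MeasurableSet.biInter (Set.to_countable _) fun a _ =>
        MeasurableSet.iInter fun _ =>
          measurableSet_lt (measurable_pi_apply a) (measurable_pi_apply v)


lemma Dom.qc_eq {p : Fin n → ℕ} {u a v : Fin n} (h : Dom p u a v) : qc p u a = qc p u v := by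
  obtain ⟨hb, hp⟩ := h
  simp only [qc, Prod.mk.injEq, hp, true_and, decide_eq_decide]
  simp only [Btw, Fin.lt_def] at hb ⊢
  omega

lemma rk_erase_eq {p : Fin n → ℕ} {u : Fin n} {s : Finset (Fin n)} {a v : Fin n} (hav : a ≠ v)
    (hnd : ¬ Dom p u a v) : rk p u (s.erase a) v = rk p u s v := by
  unfold rk
  rw [Finset.filter_erase, Finset.erase_eq_of_notMem]
  simp only [Finset.mem_filter]
  rintro ⟨-, rfl | hd⟩
  · exact hav rfl
  · exact hnd hd

lemma lmarginal_congr_point {s : Finset (Fin n)} {f g : (Fin n → ℝ) → ℝ≥0∞} (x : Fin n → ℝ)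
    (h : ∀ z : Fin n → ℝ, (∀ i ∉ s, z i = x i) → f z = g z) :
    (∫⋯∫⁻_s, f ∂(fun _ => unif)) x = (∫⋯∫⁻_s, g ∂(fun _ => unif)) x := by
  simp only [lmarginal]
  refine lintegral_congr fun y => h _ fun i hi => ?_
  simp [Function.updateFinset, hi]

lemma unif_Iio_le {r : ℝ} (hr : 0 ≤ r) : unif (Set.Iio r) ≤ ENNReal.ofReal r := by
  rw [unif, Measure.restrict_apply measurableSet_Iio]
  have hsub : Set.Iio r ∩ Set.Ioo 0 1 ⊆ Set.Ioo 0 r := by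
    rintro t ⟨ht1, ht2, ht3⟩; exact ⟨ht2, ht1⟩
  calc volume (Set.Iio r ∩ Set.Ioo 0 1) ≤ volume (Set.Ioo 0 r) := measure_mono hsub
    _ = ENNReal.ofReal r := by rw [Real.volume_Ioo, sub_zero]

lemma lintegral_pow_Ioo {C : ℝ} (hC : 0 ≤ C) (k : ℕ) :
    ∫⁻ t in Set.Ioo 0 C, ENNReal.ofReal t ^ k ∂volume =
      ENNReal.ofReal (C ^ (k + 1) / (k + 1)) := by
  have h1 : ∫⁻ t in Set.Ioo 0 C, ENNReal.ofReal t ^ k ∂volume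
      = ∫⁻ t in Set.Ioo 0 C, ENNReal.ofReal (t ^ k) ∂volume := by
    refine setLIntegral_congr_fun measurableSet_Ioo (fun t ht => ?_)
    rw [ENNReal.ofReal_pow ht.1.le]
  have hint : IntegrableOn (fun t : ℝ => t ^ k) (Set.Ioo 0 C) volume := by
    have := (intervalIntegral.intervalIntegrable_pow (μ := volume) (a := (0:ℝ)) (b := C) k)
    rw [intervalIntegrable_iff_integrableOn_Ioc_of_le hC] at this
    exact this.mono_set Set.Ioo_subset_Ioc_self
  have hnn : 0 ≤ᵐ[volume.restrict (Set.Ioo 0 C)] fun t : ℝ => t ^ k := by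
    filter_upwards [ae_restrict_mem measurableSet_Ioo] with t ht
    exact pow_nonneg ht.1.le k
  rw [h1, ← ofReal_integral_eq_lintegral_ofReal hint hnn]
  congr 1
  rw [← MeasureTheory.integral_Ioc_eq_integral_Ioo, ← intervalIntegral.integral_of_le hC,
    integral_pow]
  simp [zero_pow]


lemma lmarginal_ES_le (p : Fin n → ℕ) (u : Fin n) (W : Finset (Fin n)) (s : Finset (Fin n)) :
    u ∉ s → ∀ c : ℕ × Bool → ℝ, (∀ j, 0 ≤ c j ∧ c j ≤ 1) → ∀ x : Fin n → ℝ,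
    (∫⋯∫⁻_s, (ES p u W s c).indicator 1 ∂(fun _ => unif)) x ≤
      (∏ a ∈ s, ENNReal.ofReal (c (qc p u a))) * ∏ v ∈ W ∩ s, ((rk p u s v : ℝ≥0∞))⁻¹ := by
  induction s using Finset.strongInduction with
  | _ s ih =>
  intro hus c hc x
  rcases s.eq_empty_or_nonempty with rfl | hs
  · have hE : ES p u W ∅ c = Set.univ := by
      ext y; simp [ES]
    simp [hE]
  obtain ⟨a, ha, hmax⟩ := Finset.exists_max_image s (rho u) hs
  set s' := s.erase a with hs'def
  have hain : a ∉ s' := Finset.notMem_erase a s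
  have hsub : s' ⊂ s := Finset.erase_ssubset ha
  have hins : s = insert a s' := (Finset.insert_erase ha).symm
  have hus' : u ∉ s' := fun h => hus (Finset.mem_of_mem_erase h)
  have hau : a ≠ u := fun h => hus (h ▸ ha)
  have hnd : ∀ v ∈ s, ¬ Dom p u a v := fun v hv hd =>
    absurd (hmax v hv) (not_le.2 hd.1.rho_lt)
  have hqd : ∀ b ∈ s', (Dom p u b a ↔ qc p u b = qc p u a) := by
    intro b hb
    constructor
    · exact Dom.qc_eq
    · intro hq
      exact rho_max_dom (fun h => hus' (h ▸ hb)) hau (Finset.ne_of_mem_erase hb) hq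
        (hmax b (Finset.mem_of_mem_erase hb))
  have hfm : Measurable ((ES p u W s c).indicator (1 : (Fin n → ℝ) → ℝ≥0∞)) :=
    measurable_one.indicator (measurableSet_ES p u W s c)
  rw [lmarginal_erase _ hfm ha]
  set cap := qc p u a with hcap
  by_cases haw : a ∈ W
  · -- Case a ∈ W
    set k := (s'.filter fun b => qc p u b = cap).card with hk
    set K1 := ∏ b ∈ s'.filter (fun b => ¬ qc p u b = cap), ENNReal.ofReal (c (qc p u b)) with hK1
    set K2 := ∏ v ∈ W ∩ s', ((rk p u s' v : ℝ≥0∞))⁻¹ with hK2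
    have hrk : ∀ v ∈ W ∩ s', ((rk p u s' v : ℝ≥0∞))⁻¹ = ((rk p u s v : ℝ≥0∞))⁻¹ := by
      intro v hv
      have hvs' : v ∈ s' := (Finset.mem_inter.1 hv).2
      rw [rk_erase_eq (Finset.ne_of_mem_erase hvs').symm
        (hnd v (Finset.mem_of_mem_erase hvs'))]
    have hWins : W ∩ s = insert a (W ∩ s') := by
      rw [hins]; ext b
      simp only [Finset.mem_inter, Finset.mem_insert]
      constructor
      · rintro ⟨hbW, rfl | hbs⟩
        · exact Or.inl rfl
        · exact Or.inr ⟨hbW, hbs⟩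
      · rintro (rfl | ⟨hbW, hbs⟩)
        · exact ⟨haw, Or.inl rfl⟩
        · exact ⟨hbW, Or.inr hbs⟩
    have hanotin : a ∉ W ∩ s' := fun h => hain (Finset.mem_inter.1 h).2
    have hrka : rk p u s a = k + 1 := by
      unfold rk
      rw [hins, Finset.filter_insert, if_pos (Or.inl rfl), Finset.card_insert_of_notMem
        (fun h => hain (Finset.mem_filter.1 h).1), hk]
      congr 1
      apply congrArg
      refine Finset.filter_congr fun b hb => ?_
      simp only [Finset.ne_of_mem_erase hb, false_or]
      exact hqd b hb
    have hstep : ∀ t : ℝ, t ∈ Set.Ioo (0:ℝ) 1 →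
        (∫⋯∫⁻_s', (ES p u W s c).indicator 1 ∂(fun _ => unif)) (Function.update x a t) ≤
        (Set.Ioo (0:ℝ) (c cap)).indicator (fun t => ENNReal.ofReal t ^ k) t * (K1 * K2) := by
      intro t ht01
      by_cases ht : t < c cap
      · set c'' := Function.update c cap (min (c cap) t) with hc''
        have hc''le : ∀ j, 0 ≤ c'' j ∧ c'' j ≤ 1 := by
          intro j
          rcases eq_or_ne j cap with rfl | hj
          · rw [hc'', Function.update_self]
            exact ⟨le_min (hc _).1 ht01.1.le, (min_le_left _ _).trans (hc _).2⟩
          · rw [hc'', Function.update_of_ne hj]; exact hc j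
        have hWsub : W ∩ s' ⊆ W ∩ s := Finset.inter_subset_inter_left (Finset.erase_subset a s)
        have hcongr : (∫⋯∫⁻_s', (ES p u W s c).indicator 1 ∂(fun _ => unif))
            (Function.update x a t)
            = (∫⋯∫⁻_s', (ES p u W s' c'').indicator 1 ∂(fun _ => unif))
            (Function.update x a t) := by
          refine lmarginal_congr_point _ fun z hz => ?_
          have hza : z a = t := by
            have h' := hz a hain; rwa [Function.update_self] at h'
          have hiff : z ∈ ES p u W s c ↔ z ∈ ES p u W s' c'' := by
            constructor
            · rintro ⟨h1, h2⟩
              refine ⟨?_, ?_⟩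
              · intro b hb
                rcases eq_or_ne (qc p u b) cap with hqb | hqb
                · rw [hc'', hqb, Function.update_self]
                  refine lt_min (hqb ▸ h1 b (Finset.mem_of_mem_erase hb)) ?_
                  have hd : Dom p u b a := (hqd b hb).2 hqb
                  have h3 := h2 a (Finset.mem_inter.2 ⟨haw, ha⟩) b
                    (Finset.mem_of_mem_erase hb) hd
                  rwa [hza] at h3
                · rw [hc'', Function.update_of_ne hqb]
                  exact h1 b (Finset.mem_of_mem_erase hb)
              · intro v hv b hb hd
                exact h2 v (hWsub hv) b (Finset.mem_of_mem_erase hb) hd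
            · rintro ⟨h1, h2⟩
              refine ⟨?_, ?_⟩
              · intro b hb
                rcases Finset.mem_insert.1 (hins ▸ hb) with rfl | hb'
                · rw [hza]; exact ht
                · have h3 := h1 b hb'
                  rcases eq_or_ne (qc p u b) cap with hqb | hqb
                  · rw [hc'', hqb, Function.update_self] at h3
                    exact hqb ▸ (lt_min_iff.1 h3).1
                  · rwa [hc'', Function.update_of_ne hqb] at h3
              · intro v hv b hb hd
                rcases Finset.mem_insert.1 (hWins ▸ hv) with rfl | hv'
                · have hbs' : b ∈ s' := Finset.mem_erase.2 ⟨hd.1.ne, hb⟩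
                  have hqb : qc p u b = cap := (hqd b hbs').1 hd
                  have h3 := h1 b hbs'
                  rw [hc'', hqb, Function.update_self] at h3
                  rw [hza]
                  exact (lt_min_iff.1 h3).2
                · rcases Finset.mem_insert.1 (hins ▸ hb) with rfl | hb'
                  · exact absurd hd (hnd v (Finset.mem_inter.1 hv).2)
                  · exact h2 v hv' b hb' hd
          by_cases hz' : z ∈ ES p u W s c
          · rw [Set.indicator_of_mem hz', Set.indicator_of_mem (hiff.1 hz')]
          · rw [Set.indicator_of_notMem hz',
              Set.indicator_of_notMem (fun h => hz' (hiff.2 h))]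
        rw [hcongr]
        refine le_trans (ih s' hsub hus' c'' hc''le _) ?_
        have hsplit : ∏ b ∈ s', ENNReal.ofReal (c'' (qc p u b))
            = ENNReal.ofReal t ^ k * K1 := by
          rw [← Finset.prod_filter_mul_prod_filter_not s' (fun b => qc p u b = cap)]
          congr 1
          · rw [Finset.prod_congr rfl (fun b hb => ?_), Finset.prod_const, hk]
            rw [hc'', (Finset.mem_filter.1 hb).2, Function.update_self, min_eq_right ht.le]
          · rw [hK1]
            refine Finset.prod_congr rfl fun b hb => ?_
            rw [hc'', Function.update_of_ne (Finset.mem_filter.1 hb).2]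
        rw [hsplit, Set.indicator_of_mem (Set.mem_Ioo.2 ⟨ht01.1, ht⟩), hK2]
        exact le_of_eq (mul_assoc _ _ _)
      · have hcongr : (∫⋯∫⁻_s', (ES p u W s c).indicator 1 ∂(fun _ => unif))
            (Function.update x a t)
            = (∫⋯∫⁻_s', (fun _ => (0:ℝ≥0∞)) ∂(fun _ => unif)) (Function.update x a t) := by
          refine lmarginal_congr_point _ fun z hz => ?_
          have hza : z a = t := by
            have h' := hz a hain; rwa [Function.update_self] at h'
          rw [Set.indicator_of_notMem]
          rintro ⟨h1, -⟩
          exact ht (hza ▸ h1 a ha)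
        rw [hcongr]
        simp only [lmarginal, lintegral_zero]
        exact zero_le
    have hmeas : Measurable fun t : ℝ =>
        (Set.Ioo (0:ℝ) (c cap)).indicator (fun t => ENNReal.ofReal t ^ k) t :=
      ((ENNReal.measurable_ofReal.pow_const k).indicator measurableSet_Ioo)
    have hae : ∀ᵐ t ∂unif, t ∈ Set.Ioo (0:ℝ) 1 := by
      rw [unif]; exact ae_restrict_mem measurableSet_Ioo
    calc ∫⁻ t, (∫⋯∫⁻_s', (ES p u W s c).indicator 1 ∂fun _ => unif)
          (Function.update x a t) ∂unif
        ≤ ∫⁻ t, (Set.Ioo (0:ℝ) (c cap)).indicator (fun t => ENNReal.ofReal t ^ k) t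
            * (K1 * K2) ∂unif := by
          refine lintegral_mono_ae ?_
          filter_upwards [hae] with t ht using hstep t ht
      _ = (∫⁻ t, (Set.Ioo (0:ℝ) (c cap)).indicator (fun t => ENNReal.ofReal t ^ k) t ∂unif)
            * (K1 * K2) := lintegral_mul_const _ hmeas
      _ = (∫⁻ t in Set.Ioo (0:ℝ) (c cap), ENNReal.ofReal t ^ k ∂volume) * (K1 * K2) := by
          rw [unif, lintegral_indicator measurableSet_Ioo, Measure.restrict_restrict
            measurableSet_Ioo, Set.Ioo_inter_Ioo]
          congr 2
          simp [min_eq_left (hc cap).2]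
      _ = ENNReal.ofReal ((c cap) ^ (k + 1) / (k + 1)) * (K1 * K2) := by
          rw [lintegral_pow_Ioo (hc cap).1]
      _ ≤ (∏ b ∈ s, ENNReal.ofReal (c (qc p u b))) * ∏ v ∈ W ∩ s, ((rk p u s v : ℝ≥0∞))⁻¹ := by
          have hC : ENNReal.ofReal ((c cap) ^ (k + 1) / (k + 1))
              = ENNReal.ofReal (c cap) ^ (k + 1) * ((k:ℝ≥0∞) + 1)⁻¹ := by
            rw [div_eq_mul_inv, ENNReal.ofReal_mul (pow_nonneg (hc cap).1 _),
              ENNReal.ofReal_pow (hc cap).1, ENNReal.ofReal_inv_of_pos (Nat.cast_add_one_pos k)]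
            congr 1
            rw [show ((k:ℝ) + 1) = ((k + 1 : ℕ) : ℝ) by push_cast; ring,
              ENNReal.ofReal_natCast]
            push_cast
            ring
          have hprods : ∏ b ∈ s, ENNReal.ofReal (c (qc p u b))
              = ENNReal.ofReal (c cap) ^ (k + 1) * K1 := by
            rw [← Finset.mul_prod_erase s _ ha, ← hs'def,
              ← Finset.prod_filter_mul_prod_filter_not s' (fun b => qc p u b = cap)]
            rw [Finset.prod_congr rfl (fun b hb => ?_), Finset.prod_const, hk, ← hK1, ← hcap]
            · ring
            · rw [(Finset.mem_filter.1 hb).2]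
          have hprodr : ∏ v ∈ W ∩ s, ((rk p u s v : ℝ≥0∞))⁻¹
              = ((k:ℝ≥0∞) + 1)⁻¹ * K2 := by
            rw [hWins, Finset.prod_insert hanotin, hrka, hK2,
              Finset.prod_congr rfl hrk]
            push_cast
            ring
          rw [hC, hprods, hprodr]
          ring_nf
          exact le_refl _
  · -- Case a ∉ W
    have hWs : W ∩ s' = W ∩ s := by
      rw [hins]; ext b
      simp only [Finset.mem_inter, Finset.mem_insert]
      constructor
      · rintro ⟨hbW, hbs⟩; exact ⟨hbW, Or.inr hbs⟩
      · rintro ⟨hbW, rfl | hbs⟩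
        · exact absurd hbW haw
        · exact ⟨hbW, hbs⟩
    have hrk : ∀ v ∈ W ∩ s', ((rk p u s' v : ℝ≥0∞))⁻¹ = ((rk p u s v : ℝ≥0∞))⁻¹ := by
      intro v hv
      have hvs' : v ∈ s' := (Finset.mem_inter.1 hv).2
      rw [rk_erase_eq (Finset.ne_of_mem_erase hvs').symm
        (hnd v (Finset.mem_of_mem_erase hvs'))]
    set B := (∏ b ∈ s', ENNReal.ofReal (c (qc p u b))) *
        ∏ v ∈ W ∩ s', ((rk p u s' v : ℝ≥0∞))⁻¹ with hB
    have hstep : ∀ t : ℝ,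
        (∫⋯∫⁻_s', (ES p u W s c).indicator 1 ∂(fun _ => unif)) (Function.update x a t) ≤
        (Set.Iio (c cap)).indicator (fun _ => B) t := by
      intro t
      by_cases ht : t < c cap
      · have hcongr : (∫⋯∫⁻_s', (ES p u W s c).indicator 1 ∂(fun _ => unif))
            (Function.update x a t)
            = (∫⋯∫⁻_s', (ES p u W s' c).indicator 1 ∂(fun _ => unif))
            (Function.update x a t) := by
          refine lmarginal_congr_point _ fun z hz => ?_
          have hza : z a = t := by
            have h' := hz a hain; rwa [Function.update_self] at h'
          have hiff : z ∈ ES p u W s c ↔ z ∈ ES p u W s' c := by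
            constructor
            · rintro ⟨h1, h2⟩
              exact ⟨fun b hb => h1 b (Finset.mem_of_mem_erase hb),
                fun v hv b hb hd => h2 v (hWs ▸ hv) b (Finset.mem_of_mem_erase hb) hd⟩
            · rintro ⟨h1, h2⟩
              refine ⟨?_, ?_⟩
              · intro b hb
                rcases Finset.mem_insert.1 (hins ▸ hb) with rfl | hb'
                · rw [hza]; exact ht
                · exact h1 b hb'
              · intro v hv b hb hd
                have hv' : v ∈ W ∩ s' := hWs ▸ hv
                rcases Finset.mem_insert.1 (hins ▸ hb) with rfl | hb'
                · exact absurd hd (hnd v (Finset.mem_inter.1 hv).2)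
                · exact h2 v hv' b hb' hd
          by_cases hz' : z ∈ ES p u W s c
          · rw [Set.indicator_of_mem hz', Set.indicator_of_mem (hiff.1 hz')]
          · rw [Set.indicator_of_notMem hz',
              Set.indicator_of_notMem (fun h => hz' (hiff.2 h))]
        rw [hcongr, Set.indicator_of_mem (Set.mem_Iio.2 ht)]
        exact ih s' hsub hus' c hc _
      · have hcongr : (∫⋯∫⁻_s', (ES p u W s c).indicator 1 ∂(fun _ => unif))
            (Function.update x a t)
            = (∫⋯∫⁻_s', (fun _ => (0:ℝ≥0∞)) ∂(fun _ => unif)) (Function.update x a t) := by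
          refine lmarginal_congr_point _ fun z hz => ?_
          have hza : z a = t := by
            have h' := hz a hain; rwa [Function.update_self] at h'
          rw [Set.indicator_of_notMem]
          rintro ⟨h1, -⟩
          exact ht (hza ▸ h1 a ha)
        rw [hcongr]
        simp only [lmarginal, lintegral_zero]
        exact zero_le
    calc ∫⁻ t, (∫⋯∫⁻_s', (ES p u W s c).indicator 1 ∂fun _ => unif)
          (Function.update x a t) ∂unif
        ≤ ∫⁻ t, (Set.Iio (c cap)).indicator (fun _ => B) t ∂unif := lintegral_mono hstep
      _ = B * unif (Set.Iio (c cap)) := lintegral_indicator_const measurableSet_Iio _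
      _ ≤ B * ENNReal.ofReal (c cap) := mul_le_mul_right (unif_Iio_le (hc cap).1) _
      _ = (∏ b ∈ s, ENNReal.ofReal (c (qc p u b))) * ∏ v ∈ W ∩ s, ((rk p u s v : ℝ≥0∞))⁻¹ := by
          rw [hB, ← Finset.mul_prod_erase s _ ha, ← hWs, Finset.prod_congr rfl hrk, ← hcap]
          ring


lemma measurableSet_TRec (p : Fin n → ℕ) (u : Fin n) (W : Finset (Fin n)) :
    MeasurableSet {y : Fin n → ℝ | ∀ v ∈ W, ∀ a : Fin n, Dom p u a v → y a < y v} := by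
  have : {y : Fin n → ℝ | ∀ v ∈ W, ∀ a : Fin n, Dom p u a v → y a < y v}
      = ⋂ v ∈ (W : Set (Fin n)), ⋂ a : Fin n, ⋂ (_ : Dom p u a v),
          {y : Fin n → ℝ | y a < y v} := by
    ext y; simp [Set.mem_iInter]
  rw [this]
  exact MeasurableSet.biInter (Set.to_countable _) fun v _ =>
    MeasurableSet.iInter fun a => MeasurableSet.iInter fun _ =>
      measurableSet_lt (measurable_pi_apply a) (measurable_pi_apply v)

lemma pi_rec_le (p : Fin n → ℕ) (u : Fin n) (W : Finset (Fin n)) (hW : u ∉ W) :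
    (Measure.pi fun _ : Fin n => unif)
      {y : Fin n → ℝ | ∀ v ∈ W, ∀ a : Fin n, Dom p u a v → y a < y v} ≤
      ∏ v ∈ W, ((rk p u (Finset.univ.erase u) v : ℝ≥0∞))⁻¹ := by
  set ν := Measure.pi fun _ : Fin n => unif with hν
  have hνprob : IsProbabilityMeasure ν := by rw [hν]; infer_instance
  set T : Set (Fin n → ℝ) := {y | ∀ v ∈ W, ∀ a : Fin n, Dom p u a v → y a < y v} with hT
  set s₀ := Finset.univ.erase u with hs₀
  have hWsub : W ⊆ s₀ := fun v hv => Finset.mem_erase.2 ⟨fun h => hW (h ▸ hv), Finset.mem_univ v⟩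
  set E₀ := ES p u W s₀ (fun _ => 1) with hE₀
  set B : Set (Fin n → ℝ) := Set.pi Set.univ (fun _ => Set.Ioo (0:ℝ) 1) with hBdef
  have hBm : MeasurableSet B := MeasurableSet.univ_pi fun _ => measurableSet_Ioo
  have hbox : ν B = 1 := by
    rw [hν, hBdef, Measure.pi_pi]
    have : unif (Set.Ioo (0:ℝ) 1) = 1 := by
      rw [unif, Measure.restrict_apply measurableSet_Ioo, Set.inter_self, Real.volume_Ioo]
      norm_num
    simp [this]
  have hsub : T ⊆ E₀ ∪ Bᶜ := by
    intro y hy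
    by_cases hyB : y ∈ B
    · left
      refine ⟨fun a _ => ?_, fun v hv a _ hd => hy v (Finset.mem_inter.1 hv).1 a hd⟩
      exact (hyB a (Set.mem_univ a)).2
    · right; exact hyB
  have hE₀m : MeasurableSet E₀ := measurableSet_ES p u W s₀ _
  have hE₀le : ν E₀ ≤ ∏ v ∈ W, ((rk p u s₀ v : ℝ≥0∞))⁻¹ := by
    have hind : Measurable (E₀.indicator (1 : (Fin n → ℝ) → ℝ≥0∞)) :=
      measurable_one.indicator hE₀m
    have h1 : ν E₀ = ∫⁻ y, E₀.indicator 1 y ∂ν := by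
      rw [lintegral_indicator hE₀m]
      simp
    rw [h1, hν, lintegral_eq_lmarginal_univ (fun _ => (0:ℝ))]
    rw [show (Finset.univ : Finset (Fin n)) = insert u s₀ from
      (Finset.insert_erase (Finset.mem_univ u)).symm]
    rw [lmarginal_insert _ hind (Finset.notMem_erase u Finset.univ)]
    have hcaps : ∀ j : ℕ × Bool, 0 ≤ (fun _ => (1:ℝ)) j ∧ (fun _ => (1:ℝ)) j ≤ 1 :=
      fun j => ⟨zero_le_one, le_refl 1⟩
    have hbnd : ∀ t : ℝ, (∫⋯∫⁻_s₀, E₀.indicator 1 ∂(fun _ => unif))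
        (Function.update (fun _ => (0:ℝ)) u t) ≤ ∏ v ∈ W, ((rk p u s₀ v : ℝ≥0∞))⁻¹ := by
      intro t
      refine le_trans (lmarginal_ES_le p u W s₀ (Finset.notMem_erase u Finset.univ)
        (fun _ => 1) hcaps _) ?_
      have hWint : W ∩ s₀ = W := Finset.inter_eq_left.2 hWsub
      simp [hWint]
    calc ∫⁻ t, (∫⋯∫⁻_s₀, E₀.indicator 1 ∂fun _ => unif)
          (Function.update (fun _ => (0:ℝ)) u t) ∂unif
        ≤ ∫⁻ _, (∏ v ∈ W, ((rk p u s₀ v : ℝ≥0∞))⁻¹) ∂unif := lintegral_mono hbnd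
      _ = ∏ v ∈ W, ((rk p u s₀ v : ℝ≥0∞))⁻¹ := by
          rw [lintegral_const, measure_univ, mul_one]
  calc ν T ≤ ν (E₀ ∪ Bᶜ) := measure_mono hsub
    _ ≤ ν E₀ + ν Bᶜ := measure_union_le _ _
    _ = ν E₀ := by
        rw [measure_compl hBm (by rw [hbox]; exact ENNReal.one_ne_top), hbox, measure_univ]
        simp
    _ ≤ _ := hE₀le


lemma map_joint_eq_pi {Ω : Type} [MeasurableSpace Ω] (μ : Measure Ω) [IsProbabilityMeasure μ]
    (U : Fin n → Ω → ℝ) (hUm : ∀ i, Measurable (U i))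
    (hInd : iIndepFun U μ)
    (hId : ∀ i, Measure.map (U i) μ = unif) :
    Measure.map (fun ω i => U i ω) μ = Measure.pi fun _ => unif := by
  refine (Measure.pi_eq fun E hE => ?_).symm
  have hjm : Measurable (fun ω (i : Fin n) => U i ω) := measurable_pi_lambda _ hUm
  rw [Measure.map_apply hjm (MeasurableSet.univ_pi hE)]
  have hpre : (fun ω (i : Fin n) => U i ω) ⁻¹' Set.pi Set.univ E
      = ⋂ i ∈ Finset.univ, U i ⁻¹' E i := by
    ext ω; simp [Set.mem_pi]
  rw [hpre, hInd.measure_inter_preimage_eq_mul Finset.univ (fun i _ => hE i)]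
  refine Finset.prod_congr rfl fun i _ => ?_
  rw [← hId i, Measure.map_apply (hUm i) (hE i)]

lemma rec_prob_le {Ω : Type} [MeasurableSpace Ω] (μ : Measure Ω) [IsProbabilityMeasure μ]
    (U : Fin n → Ω → ℝ) (hUm : ∀ i, Measurable (U i))
    (hInd : iIndepFun U μ)
    (hId : ∀ i, Measure.map (U i) μ = unif)
    (p : Fin n → ℕ) (u : Fin n) (W : Finset (Fin n)) (hW : u ∉ W) :
    μ {ω | ∀ v ∈ W, ∀ a : Fin n, Dom p u a v → U a ω < U v ω} ≤
      ∏ v ∈ W, ((rk p u (Finset.univ.erase u) v : ℝ≥0∞))⁻¹ := by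
  have hjm : Measurable (fun ω (i : Fin n) => U i ω) := measurable_pi_lambda _ hUm
  have hTm := measurableSet_TRec p u W
  have hpre : {ω | ∀ v ∈ W, ∀ a : Fin n, Dom p u a v → U a ω < U v ω}
      = (fun ω (i : Fin n) => U i ω) ⁻¹'
        {y : Fin n → ℝ | ∀ v ∈ W, ∀ a : Fin n, Dom p u a v → y a < y v} := rfl
  rw [hpre, ← Measure.map_apply hjm hTm, map_joint_eq_pi μ U hUm hInd hId]
  exact pi_rec_le p u W hW


lemma rk_lt_of_dom {p : Fin n → ℕ} {u : Fin n} {s : Finset (Fin n)} {v v' : Fin n}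
    (hd : Dom p u v v') (hv : v ∈ s) (hv' : v' ∈ s) : rk p u s v < rk p u s v' := by
  apply Finset.card_lt_card
  rw [Finset.ssubset_def]
  constructor
  · intro a haf
    obtain ⟨has, hcase⟩ := Finset.mem_filter.1 haf
    refine Finset.mem_filter.2 ⟨has, Or.inr ?_⟩
    rcases hcase with rfl | hda
    · exact hd
    · exact ⟨hda.1.trans hd.1, hda.2.trans hd.2⟩
  · intro hcon
    have hmem := hcon (Finset.mem_filter.2 ⟨hv', Or.inl rfl⟩)
    obtain ⟨-, hcase⟩ := Finset.mem_filter.1 hmem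
    rcases hcase with rfl | hda
    · exact hd.1.ne rfl
    · exact absurd hda.1.rho_lt (not_lt.2 hd.1.rho_lt.le)

lemma sum_inv_rk_le (p : Fin n → ℕ) (u : Fin n) (M : ℕ) (hn : 1 ≤ n)
    (hp : ∀ v, 1 ≤ p v ∧ p v ≤ M) :
    ∑ v ∈ Finset.univ.erase u, ((rk p u (Finset.univ.erase u) v : ℝ))⁻¹ ≤
      2 * M * (1 + Real.log n) := by
  set s₀ := Finset.univ.erase u with hs₀
  have hrk1 : ∀ v ∈ s₀, 1 ≤ rk p u s₀ v := by
    intro v hv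
    refine Finset.card_pos.2 ⟨v, Finset.mem_filter.2 ⟨hv, Or.inl rfl⟩⟩
  have hrkn : ∀ v, rk p u s₀ v ≤ n := by
    intro v
    calc rk p u s₀ v ≤ s₀.card := Finset.card_filter_le _ _
      _ ≤ Finset.univ.card := Finset.card_le_card (Finset.erase_subset _ _)
      _ = n := Finset.card_univ.trans (Fintype.card_fin n)
  have hfiber : ∀ j : ℕ × Bool,
      ∑ v ∈ s₀.filter (fun v => qc p u v = j), ((rk p u s₀ v : ℝ))⁻¹ ≤ 1 + Real.log n := by
    intro j
    set C := s₀.filter (fun v => qc p u v = j) with hC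
    have hinj : ∀ x ∈ C, ∀ y ∈ C, rk p u s₀ x = rk p u s₀ y → x = y := by
      intro x hx y hy hre
      by_contra hne
      obtain ⟨hxs, hqx⟩ := Finset.mem_filter.1 hx
      obtain ⟨hys, hqy⟩ := Finset.mem_filter.1 hy
      have hxu : x ≠ u := Finset.ne_of_mem_erase hxs
      have hyu : y ≠ u := Finset.ne_of_mem_erase hys
      rcases le_total (rho u x) (rho u y) with hr | hr
      · have hdom := rho_max_dom hxu hyu hne (hqx.trans hqy.symm) hr
        exact absurd hre (Nat.ne_of_lt (rk_lt_of_dom hdom hxs hys))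
      · have hdom := rho_max_dom hyu hxu (Ne.symm hne) (hqy.trans hqx.symm) hr
        exact absurd hre.symm (Nat.ne_of_lt (rk_lt_of_dom hdom hys hxs))
    calc ∑ v ∈ C, ((rk p u s₀ v : ℝ))⁻¹
        = ∑ i ∈ C.image (rk p u s₀), ((i : ℝ))⁻¹ :=
          (Finset.sum_image (g := rk p u s₀) (f := fun i : ℕ => ((i : ℝ))⁻¹) hinj).symm
      _ ≤ ∑ i ∈ Finset.Icc 1 n, ((i : ℝ))⁻¹ := by
          refine Finset.sum_le_sum_of_subset_of_nonneg ?_ ?_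
          · intro i hi
            obtain ⟨v, hv, rfl⟩ := Finset.mem_image.1 hi
            exact Finset.mem_Icc.2 ⟨hrk1 v (Finset.mem_filter.1 hv).1, hrkn v⟩
          · intro i _ _
            positivity
      _ = (harmonic n : ℝ) := by
          rw [harmonic_eq_sum_Icc]
          push_cast
          rfl
      _ ≤ 1 + Real.log n := harmonic_le_one_add_log n
  have hmaps : ∀ v ∈ s₀, qc p u v ∈ Finset.Icc 1 M ×ˢ (Finset.univ : Finset Bool) := by
    intro v _
    exact Finset.mem_product.2 ⟨Finset.mem_Icc.2 (hp v), Finset.mem_univ _⟩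
  calc ∑ v ∈ s₀, ((rk p u s₀ v : ℝ))⁻¹
      = ∑ j ∈ Finset.Icc 1 M ×ˢ (Finset.univ : Finset Bool),
          ∑ v ∈ s₀.filter (fun v => qc p u v = j), ((rk p u s₀ v : ℝ))⁻¹ :=
        (Finset.sum_fiberwise_of_maps_to hmaps _).symm
    _ ≤ ∑ _j ∈ Finset.Icc 1 M ×ˢ (Finset.univ : Finset Bool), (1 + Real.log n) :=
        Finset.sum_le_sum fun j _ => hfiber j
    _ = 2 * M * (1 + Real.log n) := by
        rw [Finset.sum_const, Finset.card_product, Nat.card_Icc, Finset.card_univ]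
        simp [nsmul_eq_mul]
        ring


lemma per_u {Ω : Type} [MeasurableSpace Ω] (μ : Measure Ω) [IsProbabilityMeasure μ]
    (U : Fin n → Ω → ℝ) (hUm : ∀ i, Measurable (U i))
    (hInd : iIndepFun U μ)
    (hId : ∀ i, Measure.map (U i) μ = unif)
    (p : Fin n → ℕ) (u : Fin n) (T : ℕ) :
    μ {ω | T ≤ degree (fun i => (p i : ℝ) + U i ω) u} ≤
      (∏ v ∈ Finset.univ.erase u, (((rk p u (Finset.univ.erase u) v : ℝ≥0∞))⁻¹ + 1))
        / 2 ^ T := by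
  classical
  set s₀ := Finset.univ.erase u with hs₀
  set Rec : Finset (Fin n) → Set Ω :=
    fun W => {ω | ∀ v ∈ W, ∀ a : Fin n, Dom p u a v → U a ω < U v ω} with hRec
  have hRecm : ∀ W, MeasurableSet (Rec W) := by
    intro W
    have : Rec W = ⋂ v ∈ (W : Set (Fin n)), ⋂ a : Fin n, ⋂ (_ : Dom p u a v),
        {ω | U a ω < U v ω} := by
      ext ω; simp [hRec, Set.mem_iInter]
    rw [this]
    exact MeasurableSet.biInter (Set.to_countable _) fun v _ =>
      MeasurableSet.iInter fun a => MeasurableSet.iInter fun _ =>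
        measurableSet_lt (hUm a) (hUm v)
  set F : Ω → ℝ≥0∞ := fun ω => ∑ W ∈ s₀.powerset, (Rec W).indicator 1 ω with hF
  have hFm : Measurable F := by
    refine Finset.measurable_sum _ fun W _ => measurable_one.indicator (hRecm W)
  have hsubset : {ω | T ≤ degree (fun i => (p i : ℝ) + U i ω) u} ⊆
      {ω | (2:ℝ≥0∞) ^ T ≤ F ω} := by
    intro ω hω
    set h : Fin n → ℝ := fun i => (p i : ℝ) + U i ω with hh
    set N := Finset.univ.filter fun w => IsEdge h u w with hN
    have hNsub : N ⊆ s₀ := by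
      intro w hw
      have hedge : IsEdge h u w := (Finset.mem_filter.1 hw).2
      exact Finset.mem_erase.2 ⟨(hedge.1).symm, Finset.mem_univ w⟩
    have hRecN : ∀ W ∈ N.powerset, ω ∈ Rec W := by
      intro W hW v hv a hd
      have hvN : v ∈ N := (Finset.mem_powerset.1 hW) hv
      have hedge : IsEdge h u v := (Finset.mem_filter.1 hvN).2
      have hmm : min u v < a ∧ a < max u v := by
        rcases hd.1 with ⟨h1, h2⟩ | ⟨h1, h2⟩
        · exact ⟨lt_of_le_of_lt (min_le_left u v) h1, h2.trans_le (le_max_right u v)⟩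
        · exact ⟨lt_of_le_of_lt (min_le_right u v) h1, h2.trans_le (le_max_left u v)⟩
      have hlt := hedge.2 a hmm.1 hmm.2
      have hlt2 : h a < h v := lt_of_lt_of_le hlt (min_le_right _ _)
      have hpa : (p a : ℝ) = (p v : ℝ) := by exact_mod_cast congrArg Nat.cast hd.2
      simp only [hh] at hlt2
      linarith
    have hcard : T ≤ N.card := hω
    calc (2:ℝ≥0∞) ^ T ≤ 2 ^ N.card := pow_le_pow_right₀ (by norm_num) hcard
      _ = ∑ W ∈ N.powerset, (Rec W).indicator 1 ω := by
          rw [Finset.sum_congr rfl fun W hW => ?_]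
          · rw [Finset.sum_const, Finset.card_powerset, nsmul_eq_mul, mul_one]
            norm_cast
          · exact Set.indicator_of_mem (hRecN W hW) 1
      _ ≤ F ω := by
          refine Finset.sum_le_sum_of_subset (Finset.powerset_mono.2 hNsub)
  have hmarkov := meas_ge_le_lintegral_div (μ := μ) hFm.aemeasurable
    (ε := (2:ℝ≥0∞) ^ T) (pow_ne_zero _ (by norm_num)) (ENNReal.pow_ne_top (by norm_num))
  refine le_trans (measure_mono hsubset) (le_trans hmarkov ?_)
  refine ENNReal.div_le_div_right ?_ _
  have hlint : ∫⁻ ω, F ω ∂μ = ∑ W ∈ s₀.powerset, μ (Rec W) := by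
    rw [hF]
    rw [lintegral_finset_sum _ fun W _ => measurable_one.indicator (hRecm W)]
    exact Finset.sum_congr rfl fun W _ => lintegral_indicator_one (hRecm W)
  rw [hlint]
  calc ∑ W ∈ s₀.powerset, μ (Rec W)
      ≤ ∑ W ∈ s₀.powerset, ∏ v ∈ W, ((rk p u s₀ v : ℝ≥0∞))⁻¹ := by
        refine Finset.sum_le_sum fun W hW => ?_
        exact rec_prob_le μ U hUm hInd hId p u W
          (fun hu => (Finset.mem_erase.1 ((Finset.mem_powerset.1 hW) hu)).1 rfl)
    _ = ∏ v ∈ s₀, (((rk p u s₀ v : ℝ≥0∞))⁻¹ + 1) := by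
        rw [Finset.prod_add]
        exact Finset.sum_congr rfl fun W _ => by simp

lemma prod_le_exp (p : Fin n → ℕ) (u : Fin n) :
    ∏ v ∈ Finset.univ.erase u, (((rk p u (Finset.univ.erase u) v : ℝ≥0∞))⁻¹ + 1) ≤
      ENNReal.ofReal (Real.exp (∑ v ∈ Finset.univ.erase u,
        ((rk p u (Finset.univ.erase u) v : ℝ))⁻¹)) := by
  set s₀ := Finset.univ.erase u with hs₀
  rw [Real.exp_sum, ENNReal.ofReal_prod_of_nonneg fun v _ => (Real.exp_pos _).le]
  refine Finset.prod_le_prod' fun v hv => ?_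
  have hrk1 : 1 ≤ rk p u s₀ v :=
    Finset.card_pos.2 ⟨v, Finset.mem_filter.2 ⟨hv, Or.inl rfl⟩⟩
  have hpos : (0:ℝ) < (rk p u s₀ v : ℝ) := by exact_mod_cast hrk1
  have h1 : ((rk p u s₀ v : ℝ≥0∞))⁻¹ + 1
      = ENNReal.ofReal (((rk p u s₀ v : ℝ))⁻¹ + 1) := by
    rw [ENNReal.ofReal_add (by positivity) zero_le_one, ENNReal.ofReal_one,
      ENNReal.ofReal_inv_of_pos hpos, ENNReal.ofReal_natCast]
  rw [h1]
  exact ENNReal.ofReal_le_ofReal (by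
    have := Real.add_one_le_exp (((rk p u s₀ v : ℝ))⁻¹)
    linarith)


lemma real_numeric {m : ℕ} (hm : Real.exp 12 ≤ (m:ℝ)) :
    (m:ℝ) * Real.exp (2 * (⌈Real.log m⌉₊ : ℝ) * (1 + Real.log m)) * (m:ℝ)^2 ≤
      2 ^ (⌈4 * Real.log m ^ 2⌉₊ : ℕ) := by
  have hm0 : (0:ℝ) < m := lt_of_lt_of_le (Real.exp_pos 12) hm
  set L := Real.log m with hLdef
  have hL12 : 12 ≤ L := (Real.le_log_iff_exp_le hm0).2 hm
  have hMle : (⌈L⌉₊ : ℝ) ≤ L + 1 := (Nat.ceil_lt_add_one (by linarith)).le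
  have hM0 : (0:ℝ) ≤ (⌈L⌉₊:ℝ) := Nat.cast_nonneg _
  have hT : 4 * L^2 ≤ ((⌈4 * L^2⌉₊ : ℕ) : ℝ) := Nat.le_ceil _
  have hlog2 : (0.6931471803:ℝ) < Real.log 2 := Real.log_two_gt_d9
  have hmL : (m:ℝ) = Real.exp L := (Real.exp_log hm0).symm
  have h2T : Real.exp (((⌈4 * L^2⌉₊:ℕ):ℝ) * Real.log 2) = (2:ℝ) ^ (⌈4 * L^2⌉₊ : ℕ) := by
    rw [Real.exp_nat_mul, Real.exp_log two_pos]
  rw [hmL, ← h2T]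
  have hexp2 : (Real.exp L)^2 = Real.exp (2 * L) := by
    rw [sq, ← Real.exp_add]; ring_nf
  rw [hexp2, ← Real.exp_add, ← Real.exp_add]
  refine Real.exp_le_exp.2 ?_
  have h1 : 2 * (⌈L⌉₊:ℝ) * (1 + L) ≤ 2 * (L + 1) * (1 + L) := by nlinarith
  have h2 : L + 2 * (L + 1) * (1 + L) + 2 * L ≤ 2.77 * L^2 := by nlinarith
  have h3 : 2.77 * L^2 ≤ (4 * L^2) * Real.log 2 := by nlinarith [sq_nonneg L]
  have h4 : (4 * L^2) * Real.log 2 ≤ ((⌈4 * L^2⌉₊:ℕ):ℝ) * Real.log 2 := by nlinarith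
  linarith



/-- In the LASLiN model on `n` nodes (node `u` has height `p u + U u` with `p u` an integer
prediction in `{1, …, ⌈ln n⌉}` and the `U u` i.i.d. uniform on `(0,1)`), for all sufficiently
large `n` and any predictions, the probability that the maximum degree of the resulting
continuous skip list network is at least `4 ln² n` is at most `1/n²`. -/
theorem laslin_max_degree_whp :
    ∃ N : ℕ, ∀ n : ℕ, N ≤ n →
      ∀ (Ω : Type) [MeasurableSpace Ω] (μ : Measure Ω), IsProbabilityMeasure μ →
      ∀ U : Fin n → Ω → ℝ, (∀ i, Measurable (U i)) →
        iIndepFun U μ →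
        (∀ i, Measure.map (U i) μ = volume.restrict (Set.Ioo (0 : ℝ) 1)) →
        ∀ p : Fin n → ℕ, (∀ u, 1 ≤ p u ∧ p u ≤ ⌈Real.log n⌉₊) →
        μ {ω | ∃ u : Fin n,
            4 * Real.log n ^ 2 ≤ (degree (fun i => (p i : ℝ) + U i ω) u : ℝ)} ≤
          1 / (n : ℝ≥0∞) ^ 2 := by

  refine ⟨max 1 (⌈Real.exp 12⌉₊ + 1), ?_⟩
  intro n hn Ω _ μ hμ U hUm hInd hId p hp
  haveI := hμ
  have hn1 : 1 ≤ n := le_trans (le_max_left _ _) hn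
  have hexp : Real.exp 12 ≤ (n:ℝ) := by
    have h2 : (⌈Real.exp 12⌉₊ + 1 : ℕ) ≤ n := le_trans (le_max_right _ _) hn
    calc Real.exp 12 ≤ (⌈Real.exp 12⌉₊ : ℝ) := Nat.le_ceil _
      _ ≤ (n:ℝ) := by exact_mod_cast le_trans (Nat.le_succ _) h2
  set M := ⌈Real.log n⌉₊ with hM
  set T := ⌈4 * Real.log n ^ 2⌉₊ with hT
  have hId' : ∀ i, Measure.map (U i) μ = unif := hId
  set D := ENNReal.ofReal (Real.exp (2 * (M:ℝ) * (1 + Real.log n))) / 2 ^ T with hD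
  have hsub : {ω | ∃ u : Fin n,
      4 * Real.log n ^ 2 ≤ (degree (fun i => (p i : ℝ) + U i ω) u : ℝ)}
      ⊆ ⋃ u : Fin n, {ω | T ≤ degree (fun i => (p i : ℝ) + U i ω) u} := by
    rintro ω ⟨u, hu⟩
    exact Set.mem_iUnion.2 ⟨u, Nat.ceil_le.2 hu⟩
  have hboundu : ∀ u : Fin n,
      μ {ω | T ≤ degree (fun i => (p i : ℝ) + U i ω) u} ≤ D := by
    intro u
    refine le_trans (per_u μ U hUm hInd hId' p u T) ?_
    refine ENNReal.div_le_div_right ?_ _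
    refine le_trans (prod_le_exp p u) (ENNReal.ofReal_le_ofReal (Real.exp_le_exp.2 ?_))
    exact sum_inv_rk_le p u M hn1 hp
  have hmain : μ {ω | ∃ u : Fin n,
      4 * Real.log n ^ 2 ≤ (degree (fun i => (p i : ℝ) + U i ω) u : ℝ)} ≤ (n:ℝ≥0∞) * D := by
    refine le_trans (measure_mono hsub) (le_trans (measure_iUnion_le _) ?_)
    calc ∑' u : Fin n, μ {ω | T ≤ degree (fun i => (p i : ℝ) + U i ω) u}
        ≤ ∑' _u : Fin n, D := ENNReal.tsum_le_tsum hboundu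
      _ = ∑ _u : Fin n, D := tsum_fintype _
      _ = (n:ℝ≥0∞) * D := by
          rw [Finset.sum_const, Finset.card_univ, Fintype.card_fin, nsmul_eq_mul]
  refine le_trans hmain ?_
  -- numeric conclusion
  have hn0 : ((n:ℝ≥0∞)) ≠ 0 := by
    simp only [ne_eq, Nat.cast_eq_zero]; omega
  have hn0' : ((n:ℝ≥0∞))^2 ≠ 0 := pow_ne_zero _ hn0
  have hntop : ((n:ℝ≥0∞))^2 ≠ ⊤ := ENNReal.pow_ne_top (ENNReal.natCast_ne_top n)
  have hB0 : ((2:ℝ≥0∞))^T ≠ 0 := pow_ne_zero _ (by norm_num)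
  have hBtop : ((2:ℝ≥0∞))^T ≠ ⊤ := ENNReal.pow_ne_top (by norm_num)
  have hA : (n:ℝ≥0∞) * ENNReal.ofReal (Real.exp (2 * (M:ℝ) * (1 + Real.log n)))
      = ENNReal.ofReal ((n:ℝ) * Real.exp (2 * (M:ℝ) * (1 + Real.log n))) := by
    rw [ENNReal.ofReal_mul (Nat.cast_nonneg n), ENNReal.ofReal_natCast]
  have hB : ((2:ℝ≥0∞))^T = ENNReal.ofReal ((2:ℝ)^T) := by
    rw [ENNReal.ofReal_pow zero_le_two, ENNReal.ofReal_ofNat]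
  have hNsq : ((n:ℝ≥0∞))^2 = ENNReal.ofReal ((n:ℝ)^2) := by
    rw [ENNReal.ofReal_pow (Nat.cast_nonneg n), ENNReal.ofReal_natCast]
  rw [hD, ← mul_div_assoc, hA]
  have hkey : ENNReal.ofReal ((n:ℝ) * Real.exp (2 * (M:ℝ) * (1 + Real.log n))) * ((n:ℝ≥0∞))^2
      ≤ 2 ^ T := by
    rw [hNsq, hB, ← ENNReal.ofReal_mul (by positivity)]
    exact ENNReal.ofReal_le_ofReal (real_numeric hexp)
  rw [ENNReal.div_le_iff hB0 hBtop, one_div]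
  calc ENNReal.ofReal ((n:ℝ) * Real.exp (2 * (M:ℝ) * (1 + Real.log n)))
      = (((n:ℝ≥0∞))^2)⁻¹ * (((n:ℝ≥0∞))^2 *
          ENNReal.ofReal ((n:ℝ) * Real.exp (2 * (M:ℝ) * (1 + Real.log n)))) := by
        rw [← mul_assoc, ENNReal.inv_mul_cancel hn0' hntop, one_mul]
    _ ≤ (((n:ℝ≥0∞))^2)⁻¹ * 2 ^ T := by
        refine mul_le_mul_right ?_ _
        rw [mul_comm]
        exact hkey


end P2P
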